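/- arXiv:2208.10619 — 5 statements merged into one kernel-verified Lean document; each statement's English description precedes it below -/
import Mathlib

section
/- Let φ : X → Y be a map between quasi-metric spaces and ε ≥ 0. If φ(X) is ε-Sym-large in Y and d_X(x,x') − ε ≤ d_Y(φ(x),φ(x')) ≤ d_X(x,x') + ε for all x,x', then there exists a 3ε-roughly non-expansive map ψ : Y → X with max(d^s_Y(y, φψ(y))) ≤ ε for all y ∈ Y and d^s_X(x, ψφ(x)) ≤ 2ε for all x ∈ X. -/
structure QuasiMetric (X : Type*) where
  d : X → X → ℝ
  nonneg : ∀ x y, 0 ≤ d x y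
  eq_iff : ∀ x y, (d x y = 0 ∧ d y x = 0) ↔ x = y
  triangle : ∀ x y z, d x y ≤ d x z + d z y

/-- Definition (b) of a Sym-rough isometry implies definition (a): if `φ(X)` is
`ε`-Sym-large and `φ` distorts distances by at most `ε`, then there is a
`3ε`-roughly non-expansive `ψ` with `dˢ(y, φψ y) ≤ ε` and `dˢ(x, ψφ x) ≤ 2ε`. -/
theorem sym_rough_isometry_b_to_a {X Y : Type*} (qX : QuasiMetric X) (qY : QuasiMetric Y)
    (φ : X → Y) (ε : ℝ) (hε : 0 ≤ ε)
    (hlarge : ∀ y : Y, ∃ x : X, max (qY.d y (φ x)) (qY.d (φ x) y) ≤ ε)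
    (hdist : ∀ x x' : X, qX.d x x' - ε ≤ qY.d (φ x) (φ x') ∧
      qY.d (φ x) (φ x') ≤ qX.d x x' + ε) :
    ∃ ψ : Y → X,
      (∀ y y', qX.d (ψ y) (ψ y') ≤ qY.d y y' + 3 * ε) ∧
      (∀ y, max (qY.d y (φ (ψ y))) (qY.d (φ (ψ y)) y) ≤ ε) ∧
      (∀ x, max (qX.d x (ψ (φ x))) (qX.d (ψ (φ x)) x) ≤ 2 * ε) := by
  choose ψ hψ using hlarge
  refine ⟨ψ, ?_, hψ, ?_⟩
  · intro y y'
    have hy1 : qY.d (φ (ψ y)) y ≤ ε := le_trans (le_max_right _ _) (hψ y)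
    have hy2 : qY.d y' (φ (ψ y')) ≤ ε := le_trans (le_max_left _ _) (hψ y')
    have hd := (hdist (ψ y) (ψ y')).1
    have t1 := qY.triangle (φ (ψ y)) (φ (ψ y')) y
    have t2 := qY.triangle y (φ (ψ y')) y'
    linarith
  · intro x
    have h1 : qY.d (φ x) (φ (ψ (φ x))) ≤ ε := le_trans (le_max_left _ _) (hψ (φ x))
    have h2 : qY.d (φ (ψ (φ x))) (φ x) ≤ ε := le_trans (le_max_right _ _) (hψ (φ x))
    have d1 := (hdist x (ψ (φ x))).1
    have d2 := (hdist (ψ (φ x)) x).1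
    exact max_le (by linarith) (by linarith)
end

section
/- Let X and Y be quasi-metric spaces, ε > 0, and R ⊆ X × Y a correspondence with dis R ≤ 2ε. Define d on the disjoint union Z = X ⊔ Y by d|_X = d_X, d|_Y = d_Y, d(x,y) = inf{d_X(x,x') + ε + d_Y(y',y) : (x',y') ∈ R} and d(y,x) = inf{d_Y(y,y') + ε + d_X(x',x) : (x',y') ∈ R}. Then d is a quasi-metric on Z extending d_X and d_Y, and the Sym-Hausdorff distance between X and Y in (Z,d) is at most ε. -/
/-- The glued quasi-metric on the disjoint union `X ⊕ Y` built from a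
correspondence `R` and a constant `ε`. -/
noncomputable def glueDist {X Y : Type*} (dX : X → X → ℝ) (dY : Y → Y → ℝ)
    (R : Set (X × Y)) (ε : ℝ) : X ⊕ Y → X ⊕ Y → ℝ
  | Sum.inl x, Sum.inl x' => dX x x'
  | Sum.inl x, Sum.inr y => sInf {t | ∃ p ∈ R, t = dX x p.1 + ε + dY p.2 y}
  | Sum.inr y, Sum.inl x => sInf {t | ∃ p ∈ R, t = dY y p.2 + ε + dX p.1 x}
  | Sum.inr y, Sum.inr y' => dY y y'

/-- Given a correspondence `R ⊆ X × Y` with distortion `≤ 2ε`, the glued distance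
on `X ⊕ Y` is a quasi-metric extending `d_X` and `d_Y`, in which `X` and `Y` have
Sym-Hausdorff distance at most `ε`. -/
theorem glueDist_quasiMetric {X Y : Type*} (qX : QuasiMetric X) (qY : QuasiMetric Y)
    (R : Set (X × Y)) (ε : ℝ) (hε : 0 < ε)
    (hRX : ∀ x : X, ∃ y : Y, (x, y) ∈ R)
    (hRY : ∀ y : Y, ∃ x : X, (x, y) ∈ R)
    (hdis : ∀ p ∈ R, ∀ p' ∈ R, |qX.d p.1 p'.1 - qY.d p.2 p'.2| ≤ 2 * ε) :
    (∀ a b : X ⊕ Y, 0 ≤ glueDist qX.d qY.d R ε a b) ∧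
    (∀ a b : X ⊕ Y, (glueDist qX.d qY.d R ε a b = 0 ∧ glueDist qX.d qY.d R ε b a = 0) ↔ a = b) ∧
    (∀ a b c : X ⊕ Y, glueDist qX.d qY.d R ε a b ≤
      glueDist qX.d qY.d R ε a c + glueDist qX.d qY.d R ε c b) ∧
    (∀ x x' : X, glueDist qX.d qY.d R ε (Sum.inl x) (Sum.inl x') = qX.d x x') ∧
    (∀ y y' : Y, glueDist qX.d qY.d R ε (Sum.inr y) (Sum.inr y') = qY.d y y') ∧
    (∀ x : X, ∃ y : Y, max (glueDist qX.d qY.d R ε (Sum.inl x) (Sum.inr y))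
      (glueDist qX.d qY.d R ε (Sum.inr y) (Sum.inl x)) ≤ ε) ∧
    (∀ y : Y, ∃ x : X, max (glueDist qX.d qY.d R ε (Sum.inl x) (Sum.inr y))
      (glueDist qX.d qY.d R ε (Sum.inr y) (Sum.inl x)) ≤ ε) := by
  have hxx : ∀ x, qX.d x x = 0 := fun x => ((qX.eq_iff x x).mpr rfl).1
  have hyy : ∀ y, qY.d y y = 0 := fun y => ((qY.eq_iff y y).mpr rfl).1
  set S : X → Y → Set ℝ := fun x y => {t | ∃ p ∈ R, t = qX.d x p.1 + ε + qY.d p.2 y} with hS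
  set T : Y → X → Set ℝ := fun y x => {t | ∃ p ∈ R, t = qY.d y p.2 + ε + qX.d p.1 x} with hT
  have hSne : ∀ x y, (S x y).Nonempty := fun x y => by
    obtain ⟨y0, hy0⟩ := hRX x; exact ⟨_, ⟨(x, y0), hy0, rfl⟩⟩
  have hTne : ∀ y x, (T y x).Nonempty := fun y x => by
    obtain ⟨y0, hy0⟩ := hRX x; exact ⟨_, ⟨(x, y0), hy0, rfl⟩⟩
  have hSbdd : ∀ x y, BddBelow (S x y) := fun x y =>
    ⟨ε, by rintro t ⟨p, hp, rfl⟩; have := qX.nonneg x p.1; have := qY.nonneg p.2 y; linarith⟩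
  have hTbdd : ∀ y x, BddBelow (T y x) := fun y x =>
    ⟨ε, by rintro t ⟨p, hp, rfl⟩; have := qY.nonneg y p.2; have := qX.nonneg p.1 x; linarith⟩
  have hSε : ∀ x y, ε ≤ sInf (S x y) := fun x y => le_csInf (hSne x y) (by
    rintro t ⟨p, hp, rfl⟩; have := qX.nonneg x p.1; have := qY.nonneg p.2 y; linarith)
  have hTε : ∀ y x, ε ≤ sInf (T y x) := fun y x => le_csInf (hTne y x) (by
    rintro t ⟨p, hp, rfl⟩; have := qY.nonneg y p.2; have := qX.nonneg p.1 x; linarith)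
  have gS : ∀ x y, glueDist qX.d qY.d R ε (Sum.inl x) (Sum.inr y) = sInf (S x y) := fun _ _ => rfl
  have gT : ∀ y x, glueDist qX.d qY.d R ε (Sum.inr y) (Sum.inl x) = sInf (T y x) := fun _ _ => rfl
  refine ⟨?_, ?_, ?_, fun _ _ => rfl, fun _ _ => rfl, ?_, ?_⟩
  · rintro (x | y) (x' | y')
    · exact qX.nonneg x x'
    · exact le_trans hε.le (hSε x y')
    · exact le_trans hε.le (hTε y x')
    · exact qY.nonneg y y'
  · rintro (x | y) (x' | y')
    · show (qX.d x x' = 0 ∧ qX.d x' x = 0) ↔ _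
      rw [qX.eq_iff]
      exact ⟨congrArg Sum.inl, fun h => Sum.inl.inj h⟩
    · constructor
      · rintro ⟨h, -⟩
        exfalso
        rw [gS] at h
        have := hSε x y'
        linarith
      · intro h; exact absurd h (by simp)
    · constructor
      · rintro ⟨h, -⟩
        exfalso
        rw [gT] at h
        have := hTε y x'
        linarith
      · intro h; exact absurd h (by simp)
    · show (qY.d y y' = 0 ∧ qY.d y' y = 0) ↔ _
      rw [qY.eq_iff]
      exact ⟨congrArg Sum.inr, fun h => Sum.inr.inj h⟩
  · rintro (x | y) (x' | y') (x'' | y'')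
    · exact qX.triangle x x' x''
    · -- dX x x' ≤ sInf (S x y'') + sInf (T y'' x')
      show qX.d x x' ≤ sInf (S x y'') + sInf (T y'' x')
      rw [← sub_le_iff_le_add]
      refine le_csInf (hSne x y'') ?_
      rintro u ⟨p, hp, rfl⟩
      rw [sub_le_iff_le_add, ← sub_le_iff_le_add']
      refine le_csInf (hTne y'' x') ?_
      rintro v ⟨q, hq, rfl⟩
      have habs := abs_le.mp (hdis p hp q hq)
      have t2 : qX.d x x' ≤ qX.d x p.1 + qX.d p.1 x' := qX.triangle x x' p.1
      have t3 : qX.d p.1 x' ≤ qX.d p.1 q.1 + qX.d q.1 x' := qX.triangle p.1 x' q.1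
      have t4 : qX.d p.1 q.1 ≤ qY.d p.2 q.2 + 2 * ε := by linarith [habs.2]
      have t5 : qY.d p.2 q.2 ≤ qY.d p.2 y'' + qY.d y'' q.2 := qY.triangle p.2 q.2 y''
      linarith
    · -- sInf (S x y') ≤ dX x x'' + sInf (S x'' y')
      show sInf (S x y') ≤ qX.d x x'' + sInf (S x'' y')
      rw [← sub_le_iff_le_add']
      refine le_csInf (hSne x'' y') ?_
      rintro u ⟨p, hp, rfl⟩
      rw [sub_le_iff_le_add']
      have h := csInf_le (hSbdd x y') (⟨p, hp, rfl⟩ : qX.d x p.1 + ε + qY.d p.2 y' ∈ S x y')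
      have := qX.triangle x p.1 x''
      linarith
    · -- sInf (S x y') ≤ sInf (S x y'') + dY y'' y'
      show sInf (S x y') ≤ sInf (S x y'') + qY.d y'' y'
      rw [← sub_le_iff_le_add]
      refine le_csInf (hSne x y'') ?_
      rintro u ⟨p, hp, rfl⟩
      rw [sub_le_iff_le_add]
      have h := csInf_le (hSbdd x y') (⟨p, hp, rfl⟩ : qX.d x p.1 + ε + qY.d p.2 y' ∈ S x y')
      have := qY.triangle p.2 y' y''
      linarith
    · -- sInf (T y x') ≤ sInf (T y x'') + dX x'' x'
      show sInf (T y x') ≤ sInf (T y x'') + qX.d x'' x'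
      rw [← sub_le_iff_le_add]
      refine le_csInf (hTne y x'') ?_
      rintro u ⟨p, hp, rfl⟩
      rw [sub_le_iff_le_add]
      have h := csInf_le (hTbdd y x') (⟨p, hp, rfl⟩ : qY.d y p.2 + ε + qX.d p.1 x' ∈ T y x')
      have := qX.triangle p.1 x' x''
      linarith
    · -- sInf (T y x') ≤ dY y y'' + sInf (T y'' x')
      show sInf (T y x') ≤ qY.d y y'' + sInf (T y'' x')
      rw [← sub_le_iff_le_add']
      refine le_csInf (hTne y'' x') ?_
      rintro u ⟨p, hp, rfl⟩
      rw [sub_le_iff_le_add']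
      have h := csInf_le (hTbdd y x') (⟨p, hp, rfl⟩ : qY.d y p.2 + ε + qX.d p.1 x' ∈ T y x')
      have := qY.triangle y p.2 y''
      linarith
    · -- dY y y' ≤ sInf (T y x'') + sInf (S x'' y')
      show qY.d y y' ≤ sInf (T y x'') + sInf (S x'' y')
      rw [← sub_le_iff_le_add]
      refine le_csInf (hTne y x'') ?_
      rintro u ⟨p, hp, rfl⟩
      rw [sub_le_iff_le_add, ← sub_le_iff_le_add']
      refine le_csInf (hSne x'' y') ?_
      rintro v ⟨q, hq, rfl⟩
      have habs := abs_le.mp (hdis p hp q hq)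
      have t2 : qY.d y y' ≤ qY.d y p.2 + qY.d p.2 y' := qY.triangle y y' p.2
      have t3 : qY.d p.2 y' ≤ qY.d p.2 q.2 + qY.d q.2 y' := qY.triangle p.2 y' q.2
      have t4 : qY.d p.2 q.2 ≤ qX.d p.1 q.1 + 2 * ε := by linarith [habs.1]
      have t5 : qX.d p.1 q.1 ≤ qX.d p.1 x'' + qX.d x'' q.1 := qX.triangle p.1 q.1 x''
      linarith
    · exact qY.triangle y y' y''
  · intro x
    obtain ⟨y, hy⟩ := hRX x
    refine ⟨y, max_le ?_ ?_⟩
    · rw [gS]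
      have := csInf_le (hSbdd x y) (⟨(x, y), hy, rfl⟩ : qX.d x x + ε + qY.d y y ∈ S x y)
      rw [hxx, hyy] at this; linarith
    · rw [gT]
      have := csInf_le (hTbdd y x) (⟨(x, y), hy, rfl⟩ : qY.d y y + ε + qX.d x x ∈ T y x)
      rw [hxx, hyy] at this; linarith
  · intro y
    obtain ⟨x, hx⟩ := hRY y
    refine ⟨x, max_le ?_ ?_⟩
    · rw [gS]
      have := csInf_le (hSbdd x y) (⟨(x, y), hx, rfl⟩ : qX.d x x + ε + qY.d y y ∈ S x y)
      rw [hxx, hyy] at this; linarith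
    · rw [gT]
      have := csInf_le (hTbdd y x) (⟨(x, y), hx, rfl⟩ : qY.d y y + ε + qX.d x x ∈ T y x)
      rw [hxx, hyy] at this; linarith
end

section
/- Let (X,d) be a quasi-metric space. The map q : X → Q(X) sending x to the pair (d(x,·), d(·,x)) is an isometric embedding, where Q(X) carries the quasi-metric D(f,g) = max( sup_x (f_1(x) − g_1(x)) ∨ 0, sup_x (g_2(x) − f_2(x)) ∨ 0 ). -/
/-- The canonical map `x ↦ (d x ·, d · x)` is an isometric embedding of `X` into
its q-hyperconvex hull `Q(X)`: each pair `(d x ·, d · x)` is a minimal ample pair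
(it satisfies the sup-equalities characterising `Q(X)`), and the quasi-metric
`D(f,g) = max(sup (f₁ - g₁) ∨ 0, sup (g₂ - f₂) ∨ 0)` of two such pairs equals
`d x x'`. -/
theorem canonical_embedding_isometric {X : Type*} (q : QuasiMetric X) :
    (∀ x y z : X, q.d y z ≤ q.d y x + q.d x z) ∧
    (∀ x y : X, IsLUB {t | ∃ z, t = max (q.d z y - q.d z x) 0} (q.d x y)) ∧
    (∀ x y : X, IsLUB {t | ∃ z, t = max (q.d y z - q.d x z) 0} (q.d y x)) ∧
    (∀ x x' : X, max (⨆ z, max (q.d x z - q.d x' z) 0)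
      (⨆ z, max (q.d z x' - q.d z x) 0) = q.d x x') := by
  have hself : ∀ x : X, q.d x x = 0 := fun x => ((q.eq_iff x x).mpr rfl).1
  have hub1 : ∀ x y z : X, max (q.d z y - q.d z x) 0 ≤ q.d x y := by
    intro x y z
    exact max_le (by linarith [q.triangle z y x]) (q.nonneg x y)
  have hub2 : ∀ x y z : X, max (q.d y z - q.d x z) 0 ≤ q.d y x := by
    intro x y z
    exact max_le (by linarith [q.triangle y z x]) (q.nonneg y x)
  have hmem1 : ∀ x y : X, q.d x y ∈ {t | ∃ z, t = max (q.d z y - q.d z x) 0} := by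
    intro x y
    exact ⟨x, by rw [hself x, sub_zero, max_eq_left (q.nonneg x y)]⟩
  have hmem2 : ∀ x y : X, q.d y x ∈ {t | ∃ z, t = max (q.d y z - q.d x z) 0} := by
    intro x y
    exact ⟨x, by rw [hself x, sub_zero, max_eq_left (q.nonneg y x)]⟩
  refine ⟨fun x y z => q.triangle y z x, ?_, ?_, ?_⟩
  · intro x y
    refine ⟨?_, fun b hb => hb (hmem1 x y)⟩
    rintro t ⟨z, rfl⟩; exact hub1 x y z
  · intro x y
    refine ⟨?_, fun b hb => hb (hmem2 x y)⟩
    rintro t ⟨z, rfl⟩; exact hub2 x y z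
  · intro x x'
    have : Nonempty X := ⟨x⟩
    have h1 : (⨆ z, max (q.d x z - q.d x' z) 0) = q.d x x' := by
      apply le_antisymm
      · exact ciSup_le fun z => hub2 x' x z
      · have := le_ciSup (f := fun z => max (q.d x z - q.d x' z) 0)
          ⟨q.d x x', fun t ⟨z, hz⟩ => hz ▸ hub2 x' x z⟩ x'
        rwa [hself x', sub_zero, max_eq_left (q.nonneg x x')] at this
    have h2 : (⨆ z, max (q.d z x' - q.d z x) 0) ≤ q.d x x' :=
      ciSup_le fun z => hub1 x x' z
    rw [h1]
    exact max_eq_left h2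
end

section
/- Let X be a quasi-metric space, Y ⊆ X an ε-Sym-large subset, f ∈ Q(X), and g an ample pair on Y with g ≤ f|_Y pointwise. Then g* ≥ f|_Y − 2ε, where g*_1(y) = sup_{y'∈Y} (d(y',y) ∸ g_2(y')) and g*_2(y) = sup_{y'∈Y} (d(y,y') ∸ g_1(y')). -/
/-- Let `Y ⊆ X` be `ε`-Sym-large, `f = (f₁,f₂) ∈ Q(X)` and `g = (g₁,g₂)` an ample
pair on `Y` with `g ≤ f|_Y`. Then `g* ≥ f|_Y - 2ε`, where `g*` is formed by the
sup-operation over `Y`. -/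
theorem ample_pair_below_restriction {X : Type*} (q : QuasiMetric X)
    (Y : Set X) (ε : ℝ) (hε : 0 ≤ ε)
    (hlarge : ∀ x : X, ∃ y ∈ Y, max (q.d x y) (q.d y x) ≤ ε)
    (f₁ f₂ : X → ℝ)
    (hnn₁ : ∀ x, 0 ≤ f₁ x) (hnn₂ : ∀ x, 0 ≤ f₂ x)
    (hample : ∀ x y, q.d x y ≤ f₂ x + f₁ y)
    (hmin₁ : ∀ x, IsLUB {t | ∃ y, t = max (q.d y x - f₂ y) 0} (f₁ x))
    (hmin₂ : ∀ x, IsLUB {t | ∃ y, t = max (q.d x y - f₁ y) 0} (f₂ x))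
    (g₁ g₂ : Y → ℝ)
    (hgnn₁ : ∀ y, 0 ≤ g₁ y) (hgnn₂ : ∀ y, 0 ≤ g₂ y)
    (hgample : ∀ y y' : Y, q.d y y' ≤ g₂ y + g₁ y')
    (hle : ∀ y : Y, g₁ y ≤ f₁ y ∧ g₂ y ≤ f₂ y)
    (g₁s g₂s : Y → ℝ)
    (hg₁s : ∀ y : Y, IsLUB {t | ∃ y' : Y, t = max (q.d y' y - g₂ y') 0} (g₁s y))
    (hg₂s : ∀ y : Y, IsLUB {t | ∃ y' : Y, t = max (q.d y y' - g₁ y') 0} (g₂s y)) :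
    ∀ y : Y, f₁ y - 2 * ε ≤ g₁s y ∧ f₂ y - 2 * ε ≤ g₂s y := by
  intro y
  constructor
  · rw [sub_le_iff_le_add]
    refine (hmin₁ (y : X)).2 ?_
    rintro t ⟨x, rfl⟩
    obtain ⟨y', hy'Y, hy'⟩ := hlarge x
    set w : Y := ⟨y', hy'Y⟩
    -- f₂ y' ≤ f₂ x + ε
    have hf2 : f₂ y' ≤ f₂ x + ε := by
      refine (hmin₂ y').2 ?_
      rintro s ⟨z, rfl⟩
      rcases le_or_gt (q.d y' z - f₁ z) 0 with h | h
      · rw [max_eq_right h]; linarith [hnn₂ x]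
      · rw [max_eq_left h.le]
        have := q.triangle y' z x
        have hdx : q.d x z - f₁ z ≤ f₂ x := by
          have := (hmin₂ x).1 ⟨z, rfl⟩
          linarith [le_max_left (q.d x z - f₁ z) (0:ℝ)]
        have hyx : q.d y' x ≤ ε := le_trans (le_max_right _ _) hy'
        linarith
    have hmem : max (q.d w y - g₂ w) 0 ≤ g₁s y := (hg₁s y).1 ⟨w, rfl⟩
    have hxy' : q.d x y' ≤ ε := le_trans (le_max_left _ _) hy'
    have htri : q.d x y ≤ q.d x y' + q.d y' y := q.triangle x y y'
    have hg2 : g₂ w ≤ f₂ y' := (hle w).2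
    have key : q.d x y - f₂ x ≤ (q.d w y - g₂ w) + 2 * ε := by
      simp only [w]; linarith
    rcases le_or_gt (q.d x y - f₂ x) 0 with h | h
    · rw [max_eq_right h]
      have h0 : (0:ℝ) ≤ max (q.d w y - g₂ w) 0 := le_max_right _ _
      linarith
    · rw [max_eq_left h.le]
      have := le_max_left (q.d w y - g₂ w) (0:ℝ)
      linarith
  · rw [sub_le_iff_le_add]
    refine (hmin₂ (y : X)).2 ?_
    rintro t ⟨x, rfl⟩
    obtain ⟨y', hy'Y, hy'⟩ := hlarge x
    set w : Y := ⟨y', hy'Y⟩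
    -- f₁ y' ≤ f₁ x + ε
    have hf1 : f₁ y' ≤ f₁ x + ε := by
      refine (hmin₁ y').2 ?_
      rintro s ⟨z, rfl⟩
      rcases le_or_gt (q.d z y' - f₂ z) 0 with h | h
      · rw [max_eq_right h]; linarith [hnn₁ x]
      · rw [max_eq_left h.le]
        have := q.triangle z y' x
        have hdx : q.d z x - f₂ z ≤ f₁ x := by
          have := (hmin₁ x).1 ⟨z, rfl⟩
          linarith [le_max_left (q.d z x - f₂ z) (0:ℝ)]
        have hxy' : q.d x y' ≤ ε := le_trans (le_max_left _ _) hy'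
        linarith
    have hmem : max (q.d y w - g₁ w) 0 ≤ g₂s y := (hg₂s y).1 ⟨w, rfl⟩
    have hy'x : q.d y' x ≤ ε := le_trans (le_max_right _ _) hy'
    have htri : q.d y x ≤ q.d y y' + q.d y' x := q.triangle y x y'
    have hg1 : g₁ w ≤ f₁ y' := (hle w).1
    have key : q.d y x - f₁ x ≤ (q.d y w - g₁ w) + 2 * ε := by
      simp only [w]; linarith
    rcases le_or_gt (q.d y x - f₁ x) 0 with h | h
    · rw [max_eq_right h]
      have h0 : (0:ℝ) ≤ max (q.d y w - g₁ w) 0 := le_max_right _ _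
      linarith
    · rw [max_eq_left h.le]
      have := le_max_left (q.d y w - g₁ w) (0:ℝ)
      linarith
end

section
/- If X and Y are Sym-roughly isometric quasi-metric spaces and X is Sym-coarsely injective, then Y is Sym-coarsely injective. More precisely, if X is δ-Sym-coarsely injective and there are ε-roughly non-expansive maps φ : X → Y and ψ : Y → X with φ∘ψ ε-Sym-close to id_Y and ψ∘φ ε-Sym-close to id_X, then Y is (δ + 5ε/2)-Sym-coarsely injective. -/
universe u v

def SymCoarselyInjective {X : Type u} (d : X → X → ℝ) (δ : ℝ) : Prop :=
  ∀ {I : Type u} (x : I → X) (r s : I → ℝ),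
    (∀ i, 0 ≤ r i) → (∀ i, 0 ≤ s i) →
    (∀ i j, d (x i) (x j) ≤ r i + s j) →
    ∃ z, ∀ i, d (x i) z ≤ r i + δ ∧ d z (x i) ≤ s i + δ

/-- Sym-coarse injectivity is invariant under Sym-rough isometries: if `X` is
`δ`-Sym-coarsely injective and `φ : X → Y`, `ψ : Y → X` realise an `ε`-Sym-rough
isometry, then `Y` is `(δ + 5ε/2)`-Sym-coarsely injective. -/
theorem symCoarselyInjective_invariant {X : Type u} {Y : Type u}
    (qX : QuasiMetric X) (qY : QuasiMetric Y)
    (δ ε : ℝ) (hδ : 0 ≤ δ) (hε : 0 ≤ ε)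
    (φ : X → Y) (ψ : Y → X)
    (hφ : ∀ x x', qY.d (φ x) (φ x') ≤ qX.d x x' + ε)
    (hψ : ∀ y y', qX.d (ψ y) (ψ y') ≤ qY.d y y' + ε)
    (hφψ : ∀ y, max (qY.d y (φ (ψ y))) (qY.d (φ (ψ y)) y) ≤ ε)
    (hψφ : ∀ x, max (qX.d x (ψ (φ x))) (qX.d (ψ (φ x)) x) ≤ ε)
    (hX : SymCoarselyInjective qX.d δ) :
    SymCoarselyInjective qY.d (δ + 5 * ε / 2) := by
  intro I y r s hr hs hrs
  obtain ⟨z, hz⟩ := hX (fun i => ψ (y i)) (fun i => r i + ε / 2) (fun i => s i + ε / 2)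
    (fun i => by have := hr i; linarith)
    (fun i => by have := hs i; linarith)
    (fun i j => by
      have := hψ (y i) (y j)
      have := hrs i j
      linarith)
  refine ⟨φ z, fun i => ?_⟩
  have h1 := (hz i).1
  have h2 := (hz i).2
  have hfy := hφψ (y i)
  have hfy1 : qY.d (y i) (φ (ψ (y i))) ≤ ε := le_trans (le_max_left _ _) hfy
  have hfy2 : qY.d (φ (ψ (y i))) (y i) ≤ ε := le_trans (le_max_right _ _) hfy
  constructor
  · calc qY.d (y i) (φ z) ≤ qY.d (y i) (φ (ψ (y i))) + qY.d (φ (ψ (y i))) (φ z) :=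
        qY.triangle _ _ _
    _ ≤ ε + (qX.d (ψ (y i)) z + ε) := by
        have := hφ (ψ (y i)) z; linarith
    _ ≤ r i + (δ + 5 * ε / 2) := by linarith
  · calc qY.d (φ z) (y i) ≤ qY.d (φ z) (φ (ψ (y i))) + qY.d (φ (ψ (y i))) (y i) :=
        qY.triangle _ _ _
    _ ≤ (qX.d z (ψ (y i)) + ε) + ε := by
        have := hφ z (ψ (y i)); linarith
    _ ≤ s i + (δ + 5 * ε / 2) := by linarith
end
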